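/- Let f : [0,1]^d → ℝ be continuous and let N be a positive integer. Then there exist a₁,...,a_N ∈ [0,1/2) such that |φ(x) − f(x)| ≤ 2ω_f(2√d)·2^{-N} + ω_f(2√d·2^{-N}) for all x ∈ [0,1]^d, where φ(x) = 2ω_f(2√d)·Σ_{j=1}^N 2^{-j} σ₃( a_j · 2^{ 1 + Σ_{i=1}^d 2^{(i−1)N} ⌊2^{N−1} x_i⌋ } ) + f(0) − ω_f(2√d). -/

import Mathlib

/-- σ₃(x) = 1 if the fractional part of x is ≥ 1/2, else 0. -/
noncomputable def sigma3 (x : ℝ) : ℝ := if (1:ℝ)/2 ≤ Int.fract x then 1 else 0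

/-- The unit cube [0,1]^d in Euclidean space. -/
def unitCube (d : ℕ) : Set (EuclideanSpace ℝ (Fin d)) := {x | ∀ i, x i ∈ Set.Icc (0:ℝ) 1}

/-- Modulus of continuity of f on [0,1]^d with respect to the Euclidean norm. -/
noncomputable def modCont (d : ℕ) (f : EuclideanSpace ℝ (Fin d) → ℝ) (r : ℝ) : ℝ :=
  sSup {t | ∃ x ∈ unitCube d, ∃ y ∈ unitCube d, ‖x - y‖ ≤ r ∧ t = |f x - f y|}

/-!
The exponent `1 + ∑ i, 2^((i-1)N) ⌊2^(N-1) x_i⌋` is `1 + m(x)`, where `m(x)` is the index of the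
dyadic cell of `x`: its base-`2^N` digits are the cell coordinates, so points with the same index
are within `2√d 2^(-N)` of each other. On each cell, pick a representative `y` and round
`(f y - f 0 + ω) / (2ω) ∈ [0, 1]` down to some `n_m / 2^N`, where `ω = ω_f(2√d)`. The `j`-th binary
digit of every `n_m` is stored in the binary expansion of `a_j`, at position `m + 2`, and
`σ₃(a_j 2^(m+1))` reads it back, so the sum over `j` reassembles `n_{m(x)} / 2^N`.
-/

open Finset

lemma isCompact_unitCube (d : ℕ) : IsCompact (unitCube d) := by
  have h : unitCube d = EuclideanSpace.equiv (Fin d) ℝ ⁻¹' Set.Icc 0 1 := by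
    ext x
    simp [unitCube, Pi.le_def, forall_and]
  rw [h]
  exact (EuclideanSpace.equiv (Fin d) ℝ).toHomeomorph.isCompact_preimage.2 isCompact_Icc

lemma zero_mem_unitCube (d : ℕ) : (0 : EuclideanSpace ℝ (Fin d)) ∈ unitCube d :=
  fun _ => by simp

lemma norm_sub_le_sqrt_mul {d : ℕ} {x y : EuclideanSpace ℝ (Fin d)} {c : ℝ} (hc : 0 ≤ c)
    (h : ∀ i, |x i - y i| ≤ c) : ‖x - y‖ ≤ Real.sqrt d * c := by
  rw [EuclideanSpace.norm_eq, ← Real.sqrt_sq hc, ← Real.sqrt_mul (Nat.cast_nonneg d)]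
  refine Real.sqrt_le_sqrt ?_
  calc ∑ i, ‖(x - y) i‖ ^ 2 ≤ ∑ _i : Fin d, c ^ 2 :=
        sum_le_sum fun i _ => pow_le_pow_left₀ (norm_nonneg _) (h i) 2
    _ = d * c ^ 2 := by simp

lemma norm_sub_le_of_mem_unitCube {d : ℕ} {x y : EuclideanSpace ℝ (Fin d)}
    (hx : x ∈ unitCube d) (hy : y ∈ unitCube d) : ‖x - y‖ ≤ 2 * Real.sqrt d := by
  rw [mul_comm]
  refine norm_sub_le_sqrt_mul zero_le_two fun i => abs_sub_le_iff.2 ⟨?_, ?_⟩ <;>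
    linarith [(hx i).1, (hx i).2, (hy i).1, (hy i).2]

lemma abs_sub_le_modCont {d : ℕ} {f : EuclideanSpace ℝ (Fin d) → ℝ}
    (hf : ContinuousOn f (unitCube d)) {r : ℝ} {x y : EuclideanSpace ℝ (Fin d)}
    (hx : x ∈ unitCube d) (hy : y ∈ unitCube d) (h : ‖x - y‖ ≤ r) :
    |f x - f y| ≤ modCont d f r := by
  obtain ⟨M, hM⟩ := (isCompact_unitCube d).exists_bound_of_continuousOn hf
  simp only [Real.norm_eq_abs] at hM
  refine le_csSup ⟨2 * M, ?_⟩ ⟨x, hx, y, hy, h, rfl⟩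
  rintro t ⟨x, hx, y, hy, -, rfl⟩
  linarith [abs_sub (f x) (f y), hM x hx, hM y hy]

noncomputable def bitCode (b : ℕ → ℕ) (M : ℕ) : ℝ := ∑ k ∈ range M, (b k : ℝ) / 2 ^ (k + 2)

lemma bitCode_nonneg (b : ℕ → ℕ) (M : ℕ) : 0 ≤ bitCode b M :=
  sum_nonneg fun _ _ => by positivity

lemma two_mul_bitCode_succ (b : ℕ → ℕ) (M : ℕ) :
    2 * bitCode b (M + 1) = b 0 / 2 + bitCode (fun k => b (k + 1)) M := by
  rw [bitCode, bitCode, sum_range_succ', mul_add, mul_sum, add_comm]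
  congr 1
  · ring
  · exact sum_congr rfl fun k _ => by rw [pow_succ]; ring

lemma bitCode_lt_half {b : ℕ → ℕ} (hb : ∀ k, b k ≤ 1) (M : ℕ) : bitCode b M < 1 / 2 := by
  induction M generalizing b with
  | zero => simp [bitCode]
  | succ M ih =>
    have h0 : (b 0 : ℝ) ≤ 1 := by exact_mod_cast hb 0
    linarith [two_mul_bitCode_succ b M, ih fun k => hb (k + 1)]

lemma fract_two_pow_mul_bitCode {b : ℕ → ℕ} (hb : ∀ k, b k ≤ 1) (m L : ℕ) :
    Int.fract (2 ^ (m + 1) * bitCode b (m + L + 1)) =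
      b m / 2 + bitCode (fun k => b (k + m + 1)) L := by
  induction m generalizing b with
  | zero =>
    have h0 : (b 0 : ℝ) ≤ 1 := by exact_mod_cast hb 0
    have htail := bitCode_lt_half (fun k => hb (k + 1)) L
    rw [zero_add, zero_add, pow_one, two_mul_bitCode_succ, Int.fract_eq_self]
    exact ⟨add_nonneg (by positivity) (bitCode_nonneg _ _), by linarith⟩
  | succ m ih =>
    rw [show m + 1 + L + 1 = m + L + 1 + 1 by ring, pow_succ, mul_assoc, two_mul_bitCode_succ,
      mul_add, show (2 : ℝ) ^ (m + 1) * (b 0 / 2) = (b 0 * 2 ^ m : ℕ) by push_cast; ring,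
      Int.fract_natCast_add, ih fun k => hb (k + 1)]
    simp only [add_assoc]

lemma sigma3_bitCode_mul_two_zpow {b : ℕ → ℕ} (hb : ∀ k, b k ≤ 1) {m M : ℕ} (hm : m < M) :
    sigma3 (bitCode b M * 2 ^ (1 + (m : ℤ))) = b m := by
  obtain ⟨L, rfl⟩ := Nat.exists_eq_add_of_lt hm
  have htail := bitCode_lt_half (fun k => hb (k + m + 1)) L
  have hpow : (2 : ℝ) ^ (1 + (m : ℤ)) = 2 ^ (m + 1) := by
    rw [add_comm]; exact_mod_cast zpow_natCast (2 : ℝ) (m + 1)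
  rw [sigma3, hpow, mul_comm, fract_two_pow_mul_bitCode hb]
  rcases Nat.le_one_iff_eq_zero_or_eq_one.mp (hb m) with h | h <;> rw [h]
  · rw [if_neg (by push_cast; linarith)]; simp
  · rw [if_pos (by push_cast; linarith [bitCode_nonneg (fun k => b (k + m + 1)) L])]; simp

lemma sum_range_div_two_pow_mod_two_mul (N n : ℕ) :
    ∑ i ∈ range N, n / 2 ^ i % 2 * 2 ^ i = n % 2 ^ N := by
  induction N with
  | zero => simp [Nat.mod_one]
  | succ N ih =>
    rw [sum_range_succ, ih, pow_succ, Nat.mod_mul]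
    ring

lemma sum_Icc_two_zpow_mul_digit {N n : ℕ} (hn : n < 2 ^ N) :
    ∑ j ∈ Icc 1 N, (2 : ℝ) ^ (-(j : ℤ)) * ((n / 2 ^ (N - j) % 2 : ℕ) : ℝ) = n / 2 ^ N := by
  have hreflect : ∑ j ∈ Icc 1 N, n / 2 ^ (N - j) % 2 * 2 ^ (N - j) = n := by
    have hbits := sum_range_div_two_pow_mod_two_mul N n
    rw [Nat.mod_eq_of_lt hn] at hbits
    refine Eq.trans ?_ hbits
    exact sum_nbij' (N - ·) (N - ·) (by simp; omega) (by simp; omega) (by simp; omega)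
      (by simp; omega) fun _ _ => rfl
  rw [eq_div_iff (by positivity), sum_mul]
  conv_rhs => rw [← hreflect]
  push_cast
  refine sum_congr rfl fun j hj => ?_
  have hpow : (2 : ℝ) ^ N = 2 ^ (N - j) * 2 ^ j := by
    rw [← pow_add, Nat.sub_add_cancel (mem_Icc.mp hj).2]
  rw [zpow_neg, zpow_natCast, hpow]
  field_simp

lemma sum_mul_pow_lt {d B : ℕ} {u : Fin d → ℕ} (hu : ∀ i, u i < B) :
    ∑ i, u i * B ^ (i : ℕ) < B ^ d := by
  simpa [finFunctionFinEquiv_apply] using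
    (finFunctionFinEquiv fun i => (⟨u i, hu i⟩ : Fin B)).isLt

lemma eq_of_sum_mul_pow_eq {d B : ℕ} {u v : Fin d → ℕ} (hu : ∀ i, u i < B) (hv : ∀ i, v i < B)
    (h : ∑ i, u i * B ^ (i : ℕ) = ∑ i, v i * B ^ (i : ℕ)) : u = v := by
  have := finFunctionFinEquiv.injective (a₁ := fun i => (⟨u i, hu i⟩ : Fin B))
    (a₂ := fun i => ⟨v i, hv i⟩) (Fin.ext (by simpa [finFunctionFinEquiv_apply] using h))
  exact funext fun i => congrArg Fin.val (congrFun this i)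

lemma abs_sub_lt_of_floor_mul_eq {a b c : ℝ} (ha : 0 ≤ a) (hb : 0 ≤ b) (hc : 0 < c)
    (h : ⌊c * a⌋₊ = ⌊c * b⌋₊) : |a - b| < 1 / c := by
  have hfloor : ⌊c * a⌋ = ⌊c * b⌋ := by
    rw [← Int.natCast_floor_eq_floor (by positivity), ← Int.natCast_floor_eq_floor (by positivity),
      h]
  have hlt := Int.abs_sub_lt_one_of_floor_eq_floor hfloor
  rwa [← mul_sub, abs_mul, abs_of_pos hc, ← lt_div_iff₀' hc] at hlt

/-- The digits `⌊2^(N-1) x_i⌋₊ ≤ 2^(N-1)` of this index in base `2^N` are the coordinates of the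
dyadic cell of `x`. -/
noncomputable def cellIndex {d : ℕ} (N : ℕ) (x : EuclideanSpace ℝ (Fin d)) : ℕ :=
  ∑ i, ⌊(2 : ℝ) ^ (N - 1) * x i⌋₊ * (2 ^ N) ^ (i : ℕ)

lemma floor_two_pow_pred_mul_lt {N : ℕ} (hN : 0 < N) {t : ℝ} (ht : t ≤ 1) :
    ⌊(2 : ℝ) ^ (N - 1) * t⌋₊ < 2 ^ N := by
  refine (Nat.floor_le_of_le (n := 2 ^ (N - 1)) ?_).trans_lt
    (Nat.pow_lt_pow_right one_lt_two (by omega))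
  push_cast
  exact mul_le_of_le_one_right (by positivity) ht

lemma cellIndex_lt {d N : ℕ} (hN : 0 < N) {x : EuclideanSpace ℝ (Fin d)} (hx : x ∈ unitCube d) :
    cellIndex N x < (2 ^ N) ^ d :=
  sum_mul_pow_lt fun i => floor_two_pow_pred_mul_lt hN (hx i).2

lemma intCast_cellIndex {d : ℕ} (N : ℕ) {x : EuclideanSpace ℝ (Fin d)} (hx : x ∈ unitCube d) :
    (cellIndex N x : ℤ) = ∑ i : Fin d, (2 : ℤ) ^ ((i : ℕ) * N) * ⌊(2 : ℝ) ^ (N - 1) * x i⌋ := by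
  push_cast [cellIndex]
  refine sum_congr rfl fun i _ => ?_
  rw [Int.natCast_floor_eq_floor (mul_nonneg (by positivity) (hx i).1), mul_comm, pow_mul']

lemma norm_sub_le_of_cellIndex_eq {d N : ℕ} (hN : 0 < N) {x y : EuclideanSpace ℝ (Fin d)}
    (hx : x ∈ unitCube d) (hy : y ∈ unitCube d) (h : cellIndex N x = cellIndex N y) :
    ‖x - y‖ ≤ 2 * Real.sqrt d * (2 : ℝ) ^ (-(N : ℤ)) := by
  have hdigits := eq_of_sum_mul_pow_eq (fun i => floor_two_pow_pred_mul_lt hN (hx i).2)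
    (fun i => floor_two_pow_pred_mul_lt hN (hy i).2) h
  have hside : 1 / (2 : ℝ) ^ (N - 1) = 2 * 2 ^ (-(N : ℤ)) := by
    have hpow : (2 : ℝ) ^ N = 2 ^ (N - 1) * 2 := by rw [← pow_succ, Nat.sub_add_cancel hN]
    rw [zpow_neg, zpow_natCast, hpow]
    field_simp
  rw [show 2 * Real.sqrt d * (2 : ℝ) ^ (-(N : ℤ)) = Real.sqrt d * (1 / 2 ^ (N - 1)) by
    rw [hside]; ring]
  exact norm_sub_le_sqrt_mul (by positivity) fun i =>
    (abs_sub_lt_of_floor_mul_eq (hx i).1 (hy i).1 (by positivity) (congrFun hdigits i)).le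

lemma exists_nat_lt_abs_sub_le_one {u : ℝ} {B : ℕ} (hB : 0 < B) (hu0 : 0 ≤ u) (hu : u ≤ B) :
    ∃ n < B, |(n : ℝ) - u| ≤ 1 := by
  refine ⟨min ⌊u⌋₊ (B - 1), by omega, abs_sub_le_iff.2 ⟨?_, ?_⟩⟩
  · linarith [Nat.floor_le hu0, (Nat.cast_le (α := ℝ)).2 (min_le_left ⌊u⌋₊ (B - 1))]
  · rcases min_cases ⌊u⌋₊ (B - 1) with ⟨h, -⟩ | ⟨h, -⟩ <;> rw [h]
    · linarith [Nat.lt_floor_add_one u]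
    · have : ((B - 1 : ℕ) : ℝ) = B - 1 := by rw [Nat.cast_sub hB, Nat.cast_one]
      linarith

lemma exists_dyadic_approx {ω v : ℝ} (hv : |v| ≤ ω) (K : ℕ) :
    ∃ n : ℕ, n < 2 ^ K ∧ |2 * ω * ((n : ℝ) / 2 ^ K) - ω - v| ≤ 2 * ω * (2 : ℝ) ^ (-(K : ℤ)) := by
  obtain ⟨hv₁, hv₂⟩ := abs_le.mp hv
  have hω : 0 ≤ ω := (abs_nonneg v).trans hv
  set u := 2 ^ K * ((v + ω) / (2 * ω))
  -- when `ω = 0` also `v = 0`, so the junk value `u = 0` still satisfies this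
  have hu : 2 * ω * (u / 2 ^ K) = v + ω := by
    rcases hω.eq_or_lt with h | h
    · simp [← h, show v = 0 by linarith]
    · simp only [u]
      field_simp
  have hu0 : 0 ≤ u := mul_nonneg (by positivity) (div_nonneg (by linarith) (by positivity))
  have hu1 : u ≤ (2 ^ K : ℕ) := by
    push_cast
    exact mul_le_of_le_one_right (by positivity) (div_le_one_of_le₀ (by linarith) (by positivity))
  obtain ⟨n, hn, hnu⟩ := exists_nat_lt_abs_sub_le_one (by positivity) hu0 hu1
  refine ⟨n, hn, ?_⟩
  have hsplit : 2 * ω * ((n : ℝ) / 2 ^ K) - ω - v = 2 * ω * ((n - u) / 2 ^ K) := by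
    rw [sub_div, mul_sub, hu]; ring
  rw [hsplit, abs_mul, abs_of_nonneg (by positivity), abs_div,
    abs_of_pos (by positivity : (0 : ℝ) < 2 ^ K), zpow_neg, zpow_natCast, inv_eq_one_div]
  gcongr

lemma exists_dyadic_approx_on_fibers {α : Type*} {S : Set α} (idx : α → ℕ) (g : α → ℝ)
    {ω ε : ℝ} (hω : ∀ x ∈ S, |g x| ≤ ω)
    (hε : ∀ x ∈ S, ∀ y ∈ S, idx x = idx y → |g x - g y| ≤ ε) (K : ℕ) :
    ∃ n : ℕ → ℕ, (∀ m, n m < 2 ^ K) ∧ ∀ x ∈ S,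
      |2 * ω * ((n (idx x) : ℝ) / 2 ^ K) - ω - g x| ≤ 2 * ω * (2 : ℝ) ^ (-(K : ℤ)) + ε := by
  have hfiber : ∀ m, ∃ n : ℕ, n < 2 ^ K ∧ ∀ x ∈ S, idx x = m →
      |2 * ω * ((n : ℝ) / 2 ^ K) - ω - g x| ≤ 2 * ω * (2 : ℝ) ^ (-(K : ℤ)) + ε := by
    intro m
    by_cases h : ∃ y ∈ S, idx y = m
    · obtain ⟨y, hy, rfl⟩ := h
      obtain ⟨n, hn, hny⟩ := exists_dyadic_approx (hω y hy) K
      refine ⟨n, hn, fun x hx hxy => ?_⟩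
      calc |2 * ω * ((n : ℝ) / 2 ^ K) - ω - g x|
          = |(2 * ω * ((n : ℝ) / 2 ^ K) - ω - g y) + (g y - g x)| := by ring_nf
        _ ≤ _ := (abs_add_le _ _).trans (add_le_add hny (hε y hy x hx hxy.symm))
    · push Not at h
      exact ⟨0, by positivity, fun x hx hxm => absurd hxm (h x hx)⟩
  choose n hn_lt hn using hfiber
  exact ⟨n, hn_lt, fun x hx => hn _ x hx rfl⟩

theorem stmt8_general (d : ℕ) (f : EuclideanSpace ℝ (Fin d) → ℝ)
    (hf : ContinuousOn f (unitCube d)) (N : ℕ) (hN : 0 < N) :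
    ∃ a : ℕ → ℝ, (∀ j, a j ∈ Set.Ico (0:ℝ) (1/2)) ∧
      ∀ x ∈ unitCube d,
        |(2 * modCont d f (2 * Real.sqrt d) *
            ∑ j ∈ Finset.Icc 1 N, (2:ℝ) ^ (-(j:ℤ)) *
              sigma3 (a j * (2:ℝ) ^
                (1 + ∑ i : Fin d, (2:ℤ) ^ ((i:ℕ) * N) * ⌊(2:ℝ) ^ (N - 1) * x i⌋))
          + f 0 - modCont d f (2 * Real.sqrt d)) - f x|
        ≤ 2 * modCont d f (2 * Real.sqrt d) * (2:ℝ) ^ (-(N:ℤ))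
          + modCont d f (2 * Real.sqrt d * (2:ℝ) ^ (-(N:ℤ))) := by
  have h0 := zero_mem_unitCube d
  obtain ⟨n, hn_lt, hn⟩ := exists_dyadic_approx_on_fibers (S := unitCube d) (cellIndex N)
    (fun x => f x - f 0) (ω := modCont d f (2 * Real.sqrt d))
    (ε := modCont d f (2 * Real.sqrt d * (2 : ℝ) ^ (-(N : ℤ))))
    (fun x hx => abs_sub_le_modCont hf hx h0 (norm_sub_le_of_mem_unitCube hx h0))
    (fun x hx y hy hxy => by
      simpa using abs_sub_le_modCont hf hx hy (norm_sub_le_of_cellIndex_eq hN hx hy hxy)) N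
  have hdigit : ∀ j m, n m / 2 ^ (N - j) % 2 ≤ 1 := fun _ _ =>
    Nat.le_of_lt_succ (Nat.mod_lt _ two_pos)
  refine ⟨fun j => bitCode (fun m => n m / 2 ^ (N - j) % 2) ((2 ^ N) ^ d),
    fun j => ⟨bitCode_nonneg _ _, bitCode_lt_half (hdigit j) _⟩, fun x hx => ?_⟩
  rw [← intCast_cellIndex N hx]
  simp_rw [sigma3_bitCode_mul_two_zpow (hdigit _) (cellIndex_lt hN hx)]
  rw [sum_Icc_two_zpow_mul_digit (hn_lt _)]
  convert hn x hx using 2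
  ring

theorem stmt8 (d : ℕ) (hd : 0 < d) (f : EuclideanSpace ℝ (Fin d) → ℝ)
    (hf : ContinuousOn f (unitCube d)) (N : ℕ) (hN : 0 < N) :
    ∃ a : ℕ → ℝ, (∀ j, a j ∈ Set.Ico (0:ℝ) (1/2)) ∧
      ∀ x ∈ unitCube d,
        |(2 * modCont d f (2 * Real.sqrt d) *
            ∑ j ∈ Finset.Icc 1 N, (2:ℝ) ^ (-(j:ℤ)) *
              sigma3 (a j * (2:ℝ) ^
                (1 + ∑ i : Fin d, (2:ℤ) ^ ((i:ℕ) * N) * ⌊(2:ℝ) ^ (N - 1) * x i⌋))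
          + f 0 - modCont d f (2 * Real.sqrt d)) - f x|
        ≤ 2 * modCont d f (2 * Real.sqrt d) * (2:ℝ) ^ (-(N:ℤ))
          + modCont d f (2 * Real.sqrt d * (2:ℝ) ^ (-(N:ℤ))) :=
  stmt8_general d f hf N hN
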